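/- arXiv:1012.3197 — 2 statements merged into one kernel-verified Lean document; each statement's English description precedes it below -/
import Mathlib

section
/- Let M ⊂ B(H) be a von Neumann algebra and S a deterministic quantum supermap from CB(M,B(H)) to CB(N,B(K)). If E, F are normal completely positive maps from M to B(H) satisfying E(I_H) = F(I_H), then [S(E)](I_N) = [S(F)](I_N). -/
open scoped ComplexOrder InnerProductSpace
open Filter Topology ContinuousLinearMap

set_option synthInstance.maxHeartbeats 1000000
set_option maxHeartbeats 1000000

noncomputable section

namespace QSM

noncomputable instance piLpComplete (ι : Type*) (E : Type*) [NormedAddCommGroup E]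
    [CompleteSpace E] : CompleteSpace (PiLp 2 fun _ : ι => E) :=
  PiLp.completeSpace 2 _

variable {H K : Type*}
  [NormedAddCommGroup H] [InnerProductSpace ℂ H] [CompleteSpace H]
  [NormedAddCommGroup K] [InnerProductSpace ℂ K] [CompleteSpace K]

/-- Sequential/net convergence in the weak operator topology. -/
def WOTto {E F : Type*} [NormedAddCommGroup E] [InnerProductSpace ℂ E]
    [NormedAddCommGroup F] [InnerProductSpace ℂ F]
    {ι : Type*} [Preorder ι] (T : ι → (E →L[ℂ] F)) (T' : E →L[ℂ] F) : Prop :=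
  ∀ x y, Tendsto (fun n => ⟪x, T n y⟫_ℂ) atTop (𝓝 ⟪x, T' y⟫_ℂ)

section MatOp

variable {ι : Type*} [Fintype ι] [DecidableEq ι]
variable {E F : Type*} [NormedAddCommGroup E] [InnerProductSpace ℂ E]
  [NormedAddCommGroup F] [InnerProductSpace ℂ F]

/-- The `j`-th coordinate projection on the Hilbert space direct sum. -/
def projCLM (E : Type*) [NormedAddCommGroup E] [InnerProductSpace ℂ E] (j : ι) :
    (PiLp 2 fun _ : ι => E) →L[ℂ] E :=
  (ContinuousLinearMap.proj j).comp (PiLp.continuousLinearEquiv 2 ℂ _).toContinuousLinearMap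

/-- The `i`-th coordinate inclusion into the Hilbert space direct sum. -/
def inclCLM (E : Type*) [NormedAddCommGroup E] [InnerProductSpace ℂ E] (i : ι) :
    E →L[ℂ] (PiLp 2 fun _ : ι => E) :=
  ((PiLp.continuousLinearEquiv 2 ℂ _).symm.toContinuousLinearMap).comp
    (ContinuousLinearMap.pi fun j => if j = i then ContinuousLinearMap.id ℂ E else 0)

/-- The operator on the `n`-fold Hilbert space direct sum determined by a matrix of operators.
This realizes the identification `Mₙ(B(E)) = B(Eⁿ)` used for amplifications. -/
def matOp (T : ι → ι → (E →L[ℂ] F)) : (PiLp 2 fun _ : ι => E) →L[ℂ] (PiLp 2 fun _ : ι => F) :=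
  ∑ i, ∑ j, (inclCLM F i).comp ((T i j).comp (projCLM E j))

end MatOp

variable (S : StarSubalgebra ℂ (H →L[ℂ] H))

/-- A linear map `Φ : S → B(K)` is completely positive if all of its amplifications
map positive matrices over `S` to positive operators. -/
def IsCPMap (Φ : S →ₗ[ℂ] (K →L[ℂ] K)) : Prop :=
  ∀ (n : ℕ) (a : Matrix (Fin n) (Fin n) S),
    (matOp fun i j => (a i j : H →L[ℂ] H)).IsPositive →
    (matOp fun i j => Φ (a i j)).IsPositive

/-- A linear map `Φ : S → B(K)` is completely bounded with complete bound `C` if all of its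
amplifications have norm at most `C` times the norm of the input matrix. -/
def IsCBMap (Φ : S →ₗ[ℂ] (K →L[ℂ] K)) (C : ℝ) : Prop :=
  ∀ (n : ℕ) (a : Matrix (Fin n) (Fin n) S),
    ‖matOp fun i j => Φ (a i j)‖ ≤ C * ‖matOp fun i j => (a i j : H →L[ℂ] H)‖

/-- Weak*-continuity (equivalently, for positive maps, normality) of a map `Φ : S → B(K)`:
`Φ` maps bounded weak-operator convergent sequences to weak-operator convergent sequences.
(On bounded sets of `B(H)`, `H` separable, the weak* topology coincides with the weak operator
topology and is metrizable, so sequences suffice.) -/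
def WStarCont (Φ : S →ₗ[ℂ] (K →L[ℂ] K)) : Prop :=
  ∀ (A : ℕ → S) (A' : S) (c : ℝ),
    (∀ n, ‖(A n : H →L[ℂ] H)‖ ≤ c) →
    WOTto (fun n => (A n : H →L[ℂ] H)) (A' : H →L[ℂ] H) →
    WOTto (fun n => Φ (A n)) (Φ A')

/-- A normal completely positive map. -/
def NormalCP (Φ : S →ₗ[ℂ] (K →L[ℂ] K)) : Prop :=
  IsCPMap S Φ ∧ WStarCont S Φ

/-- The cone ordering on maps: `Φ ⪯ Ψ` iff `Ψ - Φ` is a normal CP map. -/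
def CPle (Φ Ψ : S →ₗ[ℂ] (K →L[ℂ] K)) : Prop := NormalCP S (Ψ - Φ)

/-- A quantum channel into the von Neumann algebra `N`: a unital normal CP map with range in
`N`. -/
def IsChannel (N : VonNeumannAlgebra K) (Φ : S →ₗ[ℂ] (K →L[ℂ] K)) : Prop :=
  NormalCP S Φ ∧ (∀ X, Φ X ∈ N) ∧ Φ 1 = 1

/-- The elementary map `E ⊙ F : S → B(K)`, `A ↦ E A F`, for `E ∈ B(H,K)`, `F ∈ B(K,H)`. -/
def sandwichMap (L : H →L[ℂ] K) (R : K →L[ℂ] H) : S →ₗ[ℂ] (K →L[ℂ] K) where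
  toFun A := L ∘L ((A : H →L[ℂ] H) ∘L R)
  map_add' a b := by simp [add_comp, comp_add]
  map_smul' c a := by simp [smul_comp, comp_smulₛₗ]


/-- `B(H)` itself, regarded as a von Neumann algebra on `H`. -/
def topVN (H : Type*) [NormedAddCommGroup H] [InnerProductSpace ℂ H] [CompleteSpace H] :
    VonNeumannAlgebra H where
  toStarSubalgebra := ⊤
  centralizer_centralizer' := by
    show Set.centralizer (Set.centralizer ((⊤ : StarSubalgebra ℂ (H →L[ℂ] H)) : Set (H →L[ℂ] H)))
      = ((⊤ : StarSubalgebra ℂ (H →L[ℂ] H)) : Set (H →L[ℂ] H))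
    ext x
    simp only [Set.mem_centralizer_iff]
    constructor
    · intro _; simp
    · intro _ g hg
      exact (hg x (by simp)).symm

/-- The inclusion map `M ↪ B(H)` as a linear map. -/
def inclusionMap (M : VonNeumannAlgebra H) : M.toStarSubalgebra →ₗ[ℂ] (H →L[ℂ] H) where
  toFun A := (A : H →L[ℂ] H)
  map_add' _ _ := rfl
  map_smul' _ _ := rfl

theorem mem_topVN_sa {H : Type*} [NormedAddCommGroup H] [InnerProductSpace ℂ H]
    [CompleteSpace H] (a : H →L[ℂ] H) : a ∈ (topVN H).toStarSubalgebra := by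
  show a ∈ (⊤ : StarSubalgebra ℂ (H →L[ℂ] H))
  exact StarSubalgebra.mem_top

/-- The linear space of weak*-continuous completely bounded maps from `M` to `B(K)` with
values in `N`, realized (via the equality `CB = span CP` proved in the paper) as the linear
span of the normal completely positive maps from `M` into `N`. -/
def CBsp (M : VonNeumannAlgebra H) (N : VonNeumannAlgebra K) :
    Submodule ℂ (M.toStarSubalgebra →ₗ[ℂ] (K →L[ℂ] K)) :=
  Submodule.span ℂ {Φ | NormalCP M.toStarSubalgebra Φ ∧ ∀ X, Φ X ∈ N}

/-- `Eₙ ⇑ E` : the sequence `Eₙ` of normal CP maps is CP-increasing, CP-bounded by the normal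
CP map `E`, and converges pointwise to `E` in the weak operator topology (so that `E` is its
least upper bound). -/
def CPUp (E : ℕ → (S →ₗ[ℂ] (K →L[ℂ] K))) (E' : S →ₗ[ℂ] (K →L[ℂ] K)) : Prop :=
  (∀ n, NormalCP S (E n)) ∧ NormalCP S E' ∧
  (∀ n m, n ≤ m → CPle S (E n) (E m)) ∧ (∀ n, CPle S (E n) E') ∧
  ∀ X, WOTto (fun n => E n X) (E' X)

section Supermap

variable {H₁ K₁ H₂ K₂ : Type*}
  [NormedAddCommGroup H₁] [InnerProductSpace ℂ H₁] [CompleteSpace H₁]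
  [NormedAddCommGroup K₁] [InnerProductSpace ℂ K₁] [CompleteSpace K₁]
  [NormedAddCommGroup H₂] [InnerProductSpace ℂ H₂] [CompleteSpace H₂]
  [NormedAddCommGroup K₂] [InnerProductSpace ℂ K₂] [CompleteSpace K₂]
  {M₁ : VonNeumannAlgebra H₁} {N₁ : VonNeumannAlgebra K₁}
  {M₂ : VonNeumannAlgebra H₂} {N₂ : VonNeumannAlgebra K₂}

/-- Complete positivity of a supermap `Sm : CB(M₁,N₁) → CB(M₂,N₂)`: for every `n`, the
amplification `Iₙ ⊗ Sm` is positive.  Here a map `CB(M₁⁽ⁿ⁾,N₁⁽ⁿ⁾)` is encoded by its components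
`t k l i j ∈ CB(M₁,N₁)` under the identification `CB(M₁⁽ⁿ⁾,N₁⁽ⁿ⁾) = CB(Mₙ(ℂ),Mₙ(ℂ)) ⊗ CB(M₁,N₁)`,
and positivity of a map of matrix algebras means that it sends positive matrices (viewed as
operators on the direct sum via `matOp`) to positive matrices. -/
def SupCP (Sm : CBsp M₁ N₁ →ₗ[ℂ] CBsp M₂ N₂) : Prop :=
  ∀ (n : ℕ) (t : Fin n → Fin n → Fin n → Fin n → CBsp M₁ N₁),
    (∀ A : Matrix (Fin n) (Fin n) M₁.toStarSubalgebra,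
      (matOp fun i j => (A i j : H₁ →L[ℂ] H₁)).IsPositive →
      (matOp fun k l => ∑ i, ∑ j,
        ((t k l i j : M₁.toStarSubalgebra →ₗ[ℂ] (K₁ →L[ℂ] K₁)) (A i j))).IsPositive) →
    ∀ B : Matrix (Fin n) (Fin n) M₂.toStarSubalgebra,
      (matOp fun i j => (B i j : H₂ →L[ℂ] H₂)).IsPositive →
      (matOp fun k l => ∑ i, ∑ j,
        ((Sm (t k l i j) : M₂.toStarSubalgebra →ₗ[ℂ] (K₂ →L[ℂ] K₂)) (B i j))).IsPositive

/-- Normality of a supermap: `Sm` preserves least upper bounds of CP-increasing CP-bounded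
sequences. -/
def SupNormal (Sm : CBsp M₁ N₁ →ₗ[ℂ] CBsp M₂ N₂) : Prop :=
  ∀ (E : ℕ → CBsp M₁ N₁) (E' : CBsp M₁ N₁),
    CPUp M₁.toStarSubalgebra (fun n => (E n : M₁.toStarSubalgebra →ₗ[ℂ] (K₁ →L[ℂ] K₁)))
      (E' : M₁.toStarSubalgebra →ₗ[ℂ] (K₁ →L[ℂ] K₁)) →
    CPUp M₂.toStarSubalgebra (fun n => (Sm (E n) : M₂.toStarSubalgebra →ₗ[ℂ] (K₂ →L[ℂ] K₂)))
      (Sm E' : M₂.toStarSubalgebra →ₗ[ℂ] (K₂ →L[ℂ] K₂))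

/-- A quantum supermap: a linear, completely positive, normal map between spaces of
weak*-continuous completely bounded maps. -/
def IsSupermap (Sm : CBsp M₁ N₁ →ₗ[ℂ] CBsp M₂ N₂) : Prop :=
  SupCP Sm ∧ SupNormal Sm

/-- A deterministic quantum supermap: a quantum supermap mapping quantum channels to quantum
channels. -/
def IsDetSupermap (Sm : CBsp M₁ N₁ →ₗ[ℂ] CBsp M₂ N₂) : Prop :=
  IsSupermap Sm ∧
  ∀ E : CBsp M₁ N₁,
    IsChannel M₁.toStarSubalgebra N₁ (E : M₁.toStarSubalgebra →ₗ[ℂ] (K₁ →L[ℂ] K₁)) →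
    IsChannel M₂.toStarSubalgebra N₂ (Sm E : M₂.toStarSubalgebra →ₗ[ℂ] (K₂ →L[ℂ] K₂))

end Supermap

/-- The Loewner order on bounded operators. -/
def opLE {E : Type*} [NormedAddCommGroup E] [InnerProductSpace ℂ E] [CompleteSpace E]
    (a b : E →L[ℂ] E) : Prop := (b - a).IsPositive

/-- Least upper bounds for the Loewner order. -/
def opIsLUB {E : Type*} [NormedAddCommGroup E] [InnerProductSpace ℂ E] [CompleteSpace E]
    (s : Set (E →L[ℂ] E)) (a : E →L[ℂ] E) : Prop :=
  (∀ b ∈ s, opLE b a) ∧ ∀ c, (∀ b ∈ s, opLE b c) → opLE a c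

section Tensor

/-- A realization of the Hilbert space tensor product `H₁ ⊗ H₂` : a Hilbert space `G` together
with a bilinear map `t : H₁ × H₂ → G` with total range and satisfying the characteristic
inner product identity. -/
structure TensorStruct (H₁ H₂ G : Type*) [NormedAddCommGroup H₁] [InnerProductSpace ℂ H₁]
    [NormedAddCommGroup H₂] [InnerProductSpace ℂ H₂]
    [NormedAddCommGroup G] [InnerProductSpace ℂ G] : Type _ where
  t : H₁ →ₗ[ℂ] H₂ →ₗ[ℂ] G
  inner_t : ∀ x y v w, ⟪t x v, t y w⟫_ℂ = ⟪x, y⟫_ℂ * ⟪v, w⟫_ℂ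
  dense_t : Dense (↑(Submodule.span ℂ {g | ∃ x v, g = t x v}) : Set G)

variable {H₁ H₂ G : Type*}
  [NormedAddCommGroup H₁] [InnerProductSpace ℂ H₁] [CompleteSpace H₁]
  [NormedAddCommGroup H₂] [InnerProductSpace ℂ H₂] [CompleteSpace H₂]
  [NormedAddCommGroup G] [InnerProductSpace ℂ G] [CompleteSpace G]

/-- The set of elementary tensors `a ⊗ b`, `a ∈ M`, `b ∈ N`, inside `B(H₁ ⊗ H₂)`. -/
def elemT (τ : TensorStruct H₁ H₂ G) (M : VonNeumannAlgebra H₁) (N : VonNeumannAlgebra H₂) :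
    Set (G →L[ℂ] G) :=
  {c | ∃ a ∈ M, ∃ b ∈ N, ∀ x v, c (τ.t x v) = τ.t (a x) (b v)}

/-- The von Neumann algebra tensor product `M ⊗̄ N`, realized as the double commutant of the
set of elementary tensors. -/
def vnT (τ : TensorStruct H₁ H₂ G) (M : VonNeumannAlgebra H₁) (N : VonNeumannAlgebra H₂) :
    VonNeumannAlgebra G where
  toStarSubalgebra := StarSubalgebra.centralizer ℂ
    ((StarSubalgebra.centralizer ℂ (elemT τ M N) :
        StarSubalgebra ℂ (G →L[ℂ] G)) : Set (G →L[ℂ] G))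
  centralizer_centralizer' := by
    show Set.centralizer (Set.centralizer ((StarSubalgebra.centralizer ℂ
        ((StarSubalgebra.centralizer ℂ (elemT τ M N) :
          StarSubalgebra ℂ (G →L[ℂ] G)) : Set (G →L[ℂ] G))) : Set (G →L[ℂ] G)))
      = ((StarSubalgebra.centralizer ℂ
        ((StarSubalgebra.centralizer ℂ (elemT τ M N) :
          StarSubalgebra ℂ (G →L[ℂ] G)) : Set (G →L[ℂ] G))) : Set (G →L[ℂ] G))
    rw [StarSubalgebra.coe_centralizer_centralizer]
    exact Set.centralizer_centralizer_centralizer _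

end Tensor

section Amp

variable {H₁ K₁ H₂ K₂ V G G' : Type*}
  [NormedAddCommGroup H₁] [InnerProductSpace ℂ H₁] [CompleteSpace H₁]
  [NormedAddCommGroup K₁] [InnerProductSpace ℂ K₁] [CompleteSpace K₁]
  [NormedAddCommGroup H₂] [InnerProductSpace ℂ H₂] [CompleteSpace H₂]
  [NormedAddCommGroup K₂] [InnerProductSpace ℂ K₂] [CompleteSpace K₂]
  [NormedAddCommGroup V] [InnerProductSpace ℂ V] [CompleteSpace V]
  [NormedAddCommGroup G] [InnerProductSpace ℂ G] [CompleteSpace G]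
  [NormedAddCommGroup G'] [InnerProductSpace ℂ G'] [CompleteSpace G']

/-- `Ē` is the amplification `E ⊗ id_{B(V)} : M ⊗̄ B(V) → B(K₁ ⊗ V)` of the
weak*-continuous completely bounded map `E : M → B(K₁)` : it is weak*-continuous and acts in
the expected way on elementary tensors. -/
def IsAmp (M : VonNeumannAlgebra H₁) (τ : TensorStruct H₁ V G) (κ : TensorStruct K₁ V G')
    (E : M.toStarSubalgebra →ₗ[ℂ] (K₁ →L[ℂ] K₁))
    (Ebar : (vnT τ M (topVN V)).toStarSubalgebra →ₗ[ℂ] (G' →L[ℂ] G')) : Prop :=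
  WStarCont (vnT τ M (topVN V)).toStarSubalgebra Ebar ∧
  ∀ (c : (vnT τ M (topVN V)).toStarSubalgebra) (a : H₁ →L[ℂ] H₁) (ha : a ∈ M) (b : V →L[ℂ] V),
    (∀ x v, (c : G →L[ℂ] G) (τ.t x v) = τ.t (a x) (b v)) →
    ∀ x v, (Ebar c) (κ.t x v) = κ.t ((E ⟨a, ha⟩) x) (b v)

/-- The triple `(V, W, F)` (presented through concrete realizations `τ`, `κ` of the Hilbert
tensor products `H₁ ⊗ V` and `K₁ ⊗ V`) is a dilation of the supermap `Sm`, i.e.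
`[Sm(E)](A) = W* [(E ⊗ id_V)(F(A))] W` for all `E ∈ CB(M₁, B(K₁))` and `A ∈ M₂`. -/
def DilatesTo (M₁ : VonNeumannAlgebra H₁) (M₂ : VonNeumannAlgebra H₂)
    (τ : TensorStruct H₁ V G) (κ : TensorStruct K₁ V G') (W : K₂ →L[ℂ] G')
    (F : M₂.toStarSubalgebra →ₗ[ℂ] (G →L[ℂ] G)) (hF : ∀ X, F X ∈ vnT τ M₁ (topVN V))
    (Sm : CBsp M₁ (topVN K₁) →ₗ[ℂ] CBsp M₂ (topVN K₂)) : Prop :=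
  ∀ E : CBsp M₁ (topVN K₁),
    ∃ Ebar, IsAmp M₁ τ κ (E : M₁.toStarSubalgebra →ₗ[ℂ] (K₁ →L[ℂ] K₁)) Ebar ∧
      ∀ A, (Sm E : M₂.toStarSubalgebra →ₗ[ℂ] (K₂ →L[ℂ] K₂)) A
        = (ContinuousLinearMap.adjoint W) ∘L ((Ebar ⟨F A, hF A⟩) ∘L W)

/-- Minimality of a dilation: `V = span closure of {(u* ⊗ I_V) W v | u ∈ K₁, v ∈ K₂}`. -/
def MinimalDil (κ : TensorStruct K₁ V G') (W : K₂ →L[ℂ] G') : Prop :=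
  Dense (↑(Submodule.span ℂ {w : V | ∃ (u : K₁) (v : K₂) (ℓ : G' →L[ℂ] V),
    (∀ k z, ℓ (κ.t k z) = ⟪u, k⟫_ℂ • z) ∧ w = ℓ (W v)}) : Set V)

end Amp

/-- A bundled separable complex Hilbert space. -/
structure HilbertSpaceStruct : Type 1 where
  carrier : Type
  [grp : NormedAddCommGroup carrier]
  [ipc : InnerProductSpace ℂ carrier]
  [cpl : CompleteSpace carrier]
  [sep : TopologicalSpace.SeparableSpace carrier]

attribute [instance] HilbertSpaceStruct.grp HilbertSpaceStruct.ipc HilbertSpaceStruct.cpl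
  HilbertSpaceStruct.sep


/-! Choose `c > ‖E(1)‖` and a normal CP map `Θ` with `Θ(1) = c·1 - E(1)`, namely
`A ↦ ⟪x, A x⟫ • (c·1 - E(1))` for a unit vector `x`. Then `c⁻¹(E + Θ)` and `c⁻¹(F + Θ)` are
channels, so their images under `S` are unital, and linearity of `S` gives
`S(E)(1) + S(Θ)(1) = c·1 = S(F)(1) + S(Θ)(1)`. -/

lemma _root_.Matrix.PosSemidef.sum_entries_nonneg {ι : Type*} [Fintype ι] {A : Matrix ι ι ℂ}
    (hA : A.PosSemidef) : 0 ≤ ∑ i, ∑ j, A i j := by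
  simpa [dotProduct, Matrix.mulVec, Finset.mul_sum] using hA.dotProduct_mulVec_nonneg fun _ => 1

section HilbertOperators

variable {E : Type*} [NormedAddCommGroup E] [InnerProductSpace ℂ E]

lemma _root_.ContinuousLinearMap.isPositive_iff_forall_inner_nonneg (T : E →L[ℂ] E) :
    T.IsPositive ↔ ∀ v, 0 ≤ ⟪v, T v⟫_ℂ := by
  refine ⟨fun hT => hT.inner_nonneg_right, fun h => ?_⟩
  have hsymm : ∀ v, ⟪T v, v⟫_ℂ = ⟪v, T v⟫_ℂ := fun v => by
    rw [← inner_conj_symm]; exact (IsSelfAdjoint.of_nonneg (h v)).star_eq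
  refine (isPositive_iff T).mpr ⟨?_, fun v => hsymm v ▸ h v⟩
  refine (LinearMap.isSymmetric_iff_inner_map_self_real _).mpr fun v => ?_
  rw [coe_coe, inner_conj_symm, hsymm]

variable [CompleteSpace E]

lemma _root_.ContinuousLinearMap.IsPositive.posSemidef_inner {T : E →L[ℂ] E}
    (hT : T.IsPositive) {ι : Type*} [Fintype ι] (e : ι → E) :
    (Matrix.of fun i j => ⟪e i, T (e j)⟫_ℂ).PosSemidef := by
  obtain ⟨Q, rfl⟩ := CStarAlgebra.nonneg_iff_eq_star_mul_self.mp ((nonneg_iff_isPositive T).mpr hT)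
  have hgram : (Matrix.of fun i j => ⟪e i, (star Q * Q) (e j)⟫_ℂ) = Matrix.gram ℂ (Q ∘ e) := by
    ext i j
    simp [star_eq_adjoint, adjoint_inner_right]
  rw [hgram]
  exact Matrix.posSemidef_gram ℂ _

lemma _root_.ContinuousLinearMap.IsPositive.smul_one_sub {D : E →L[ℂ] E} (hD : D.IsPositive)
    {c : ℝ} (hc : ‖D‖ ≤ c) :
    ((c : ℂ) • 1 - D).IsPositive := by
  refine (le_def _ _).mp ?_
  calc D ≤ algebraMap ℝ _ ‖D‖ := hD.isSelfAdjoint.le_algebraMap_norm_self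
    _ ≤ algebraMap ℝ _ c := algebraMap_mono _ hc
    _ = (c : ℂ) • 1 := by rw [Algebra.algebraMap_eq_smul_one, Complex.coe_smul]

end HilbertOperators

section MatOpCalculus

variable {ι : Type*} [DecidableEq ι]
  {E F : Type*} [NormedAddCommGroup E] [InnerProductSpace ℂ E]
  [NormedAddCommGroup F] [InnerProductSpace ℂ F]

lemma inclCLM_apply (i k : ι) (y : F) :
    inclCLM (ι := ι) F i y k = if k = i then y else 0 := by
  change (ContinuousLinearMap.pi fun j => if j = i then ContinuousLinearMap.id ℂ F else 0) y k = _
  split_ifs with h <;> simp [h]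

lemma inner_matOp [Fintype ι] (T : ι → ι → (E →L[ℂ] F)) (w : PiLp 2 fun _ : ι => F)
    (v : PiLp 2 fun _ : ι => E) :
    ⟪w, matOp T v⟫_ℂ = ∑ i, ∑ j, ⟪w i, T i j (v j)⟫_ℂ := by
  simp only [matOp, sum_apply, inner_sum, comp_apply, PiLp.inner_apply, inclCLM_apply]
  refine Finset.sum_congr rfl fun i _ => Finset.sum_congr rfl fun j _ => ?_
  simp [apply_ite, projCLM]

lemma inner_inclCLM_matOp_inclCLM [Fintype ι] (T : ι → ι → (E →L[ℂ] E)) (i j : ι) (x : E) :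
    ⟪inclCLM E i x, matOp T (inclCLM E j x)⟫_ℂ = ⟪x, T i j x⟫_ℂ := by
  simp only [inner_matOp, inclCLM_apply]
  rw [Fintype.sum_eq_single i fun k hk => by simp [hk]]
  rw [Fintype.sum_eq_single j fun l hl => by simp [hl]]
  simp

lemma isPositive_matOp_fin_one_iff (T : E →L[ℂ] E) :
    (matOp fun _ _ : Fin 1 => T).IsPositive ↔ T.IsPositive := by
  simp only [isPositive_iff_forall_inner_nonneg, inner_matOp, Fin.sum_univ_one]
  exact ⟨fun h y => by simpa using h (WithLp.toLp 2 fun _ => y), fun h w => h (w 0)⟩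

lemma matOp_add [Fintype ι] (T U : ι → ι → (E →L[ℂ] F)) :
    matOp (fun i j => T i j + U i j) = matOp T + matOp U := by
  simp only [matOp, add_comp, comp_add, Finset.sum_add_distrib]

lemma matOp_smul [Fintype ι] (z : ℂ) (T : ι → ι → (E →L[ℂ] F)) :
    matOp (fun i j => z • T i j) = z • matOp T := by
  simp only [matOp, smul_comp, comp_smul, Finset.smul_sum]

end MatOpCalculus

section MapCones

variable {H K : Type*} [NormedAddCommGroup H] [InnerProductSpace ℂ H] [CompleteSpace H]
  [NormedAddCommGroup K] [InnerProductSpace ℂ K]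
  {S : StarSubalgebra ℂ (H →L[ℂ] H)} {Φ Ψ : S →ₗ[ℂ] (K →L[ℂ] K)}

lemma IsCPMap.add (hΦ : IsCPMap S Φ) (hΨ : IsCPMap S Ψ) : IsCPMap S (Φ + Ψ) := by
  intro n a ha
  simpa only [LinearMap.add_apply, matOp_add] using (hΦ n a ha).add (hΨ n a ha)

lemma IsCPMap.smul (hΦ : IsCPMap S Φ) {z : ℂ} (hz : 0 ≤ z) : IsCPMap S (z • Φ) := by
  intro n a ha
  simpa only [LinearMap.smul_apply, matOp_smul] using (hΦ n a ha).smul_of_nonneg hz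

lemma IsCPMap.isPositive_map_one (hΦ : IsCPMap S Φ) : (Φ 1).IsPositive := by
  have h1 : (matOp fun _ _ : Fin 1 => ((1 : S) : H →L[ℂ] H)).IsPositive :=
    (isPositive_matOp_fin_one_iff _).mpr isPositive_one
  exact (isPositive_matOp_fin_one_iff _).mp (hΦ 1 (fun _ _ => 1) h1)

lemma WStarCont.add (hΦ : WStarCont S Φ) (hΨ : WStarCont S Ψ) : WStarCont S (Φ + Ψ) := by
  intro A A' c hb hA y z
  simp only [LinearMap.add_apply, add_apply, inner_add_right]
  exact (hΦ A A' c hb hA y z).add (hΨ A A' c hb hA y z)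

lemma WStarCont.smul (hΦ : WStarCont S Φ) (w : ℂ) : WStarCont S (w • Φ) := by
  intro A A' c hb hA y z
  simp only [LinearMap.smul_apply, smul_apply, inner_smul_right]
  exact (hΦ A A' c hb hA y z).const_mul w

lemma NormalCP.add (hΦ : NormalCP S Φ) (hΨ : NormalCP S Ψ) : NormalCP S (Φ + Ψ) :=
  ⟨hΦ.1.add hΨ.1, hΦ.2.add hΨ.2⟩

lemma NormalCP.smul (hΦ : NormalCP S Φ) {z : ℂ} (hz : 0 ≤ z) : NormalCP S (z • Φ) :=
  ⟨hΦ.1.smul hz, hΦ.2.smul z⟩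

end MapCones

section VectorState

variable {H K : Type*} [NormedAddCommGroup H] [InnerProductSpace ℂ H] [CompleteSpace H]
  [NormedAddCommGroup K] [InnerProductSpace ℂ K]
  (S : StarSubalgebra ℂ (H →L[ℂ] H))

def vectorStateMap (x : H) (P : K →L[ℂ] K) : S →ₗ[ℂ] (K →L[ℂ] K) where
  toFun A := ⟪x, (A : H →L[ℂ] H) x⟫_ℂ • P
  map_add' a b := by simp only [AddMemClass.coe_add, add_apply, inner_add_right, add_smul]
  map_smul' c a := by
    simp only [SetLike.val_smul, smul_apply, inner_smul_right, RingHom.id_apply, smul_smul]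

lemma vectorStateMap_apply (x : H) (P : K →L[ℂ] K) (A : S) :
    vectorStateMap S x P A = ⟪x, (A : H →L[ℂ] H) x⟫_ℂ • P := rfl

lemma isCPMap_vectorStateMap [CompleteSpace K] (x : H) {P : K →L[ℂ] K} (hP : P.IsPositive) :
    IsCPMap S (vectorStateMap S x P) := by
  intro n a ha
  rw [isPositive_iff_forall_inner_nonneg]
  intro v
  have hs := ha.posSemidef_inner fun i => inclCLM H i x
  simp only [inner_inclCLM_matOp_inclCLM] at hs
  have hp := hP.posSemidef_inner fun i => v i
  -- Schur product theorem
  convert (hs.hadamard hp).sum_entries_nonneg using 1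
  simp only [inner_matOp, vectorStateMap_apply, smul_apply, inner_smul_right,
    Matrix.hadamard_apply, Matrix.of_apply]

lemma wStarCont_vectorStateMap (x : H) (P : K →L[ℂ] K) : WStarCont S (vectorStateMap S x P) := by
  intro A A' c _ hA y z
  simp only [vectorStateMap_apply, smul_apply, inner_smul_right]
  exact (hA x x).mul_const _

lemma vectorStateMap_one {x : H} (hx : ‖x‖ = 1) (P : K →L[ℂ] K) :
    vectorStateMap S x P 1 = P := by
  simp [vectorStateMap_apply, inner_self_eq_norm_sq_to_K, hx]

lemma exists_normalCP_map_one_eq [CompleteSpace K] [Nontrivial H] {P : K →L[ℂ] K}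
    (hP : P.IsPositive) :
    ∃ Θ : S →ₗ[ℂ] (K →L[ℂ] K), NormalCP S Θ ∧ Θ 1 = P := by
  obtain ⟨x, hx⟩ := exists_norm_eq H zero_le_one
  exact ⟨vectorStateMap S x P, ⟨isCPMap_vectorStateMap S x hP, wStarCont_vectorStateMap S x P⟩,
    vectorStateMap_one S hx P⟩

end VectorState

section Supermap

variable {H₁ K₁ H₂ K₂ : Type*}
  [NormedAddCommGroup H₁] [InnerProductSpace ℂ H₁] [CompleteSpace H₁]
  [NormedAddCommGroup K₁] [InnerProductSpace ℂ K₁] [CompleteSpace K₁]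
  [NormedAddCommGroup H₂] [InnerProductSpace ℂ H₂] [CompleteSpace H₂]
  [NormedAddCommGroup K₂] [InnerProductSpace ℂ K₂] [CompleteSpace K₂]
  {M₁ : VonNeumannAlgebra H₁} {N₁ : VonNeumannAlgebra K₁}
  {M₂ : VonNeumannAlgebra H₂} {N₂ : VonNeumannAlgebra K₂}

lemma CBsp.apply_mem {Φ : M₁.toStarSubalgebra →ₗ[ℂ] (K₁ →L[ℂ] K₁)} (hΦ : Φ ∈ CBsp M₁ N₁)
    (X : M₁.toStarSubalgebra) : Φ X ∈ N₁ := by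
  induction hΦ using Submodule.span_induction with
  | mem Ψ hΨ => exact hΨ.2 X
  | zero => exact zero_mem N₁
  | add Ψ Ψ' _ _ hΨ hΨ' => exact add_mem hΨ hΨ'
  | smul z Ψ _ hΨ => exact N₁.toStarSubalgebra.smul_mem hΨ z

lemma NormalCP.mem_CBsp_topVN {Φ : M₁.toStarSubalgebra →ₗ[ℂ] (K₁ →L[ℂ] K₁)}
    (hΦ : NormalCP M₁.toStarSubalgebra Φ) : Φ ∈ CBsp M₁ (topVN K₁) :=
  Submodule.subset_span ⟨hΦ, fun _ => mem_topVN_sa _⟩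

lemma IsDetSupermap.apply_one_add_apply_one_eq_smul_one {Sm : CBsp M₁ N₁ →ₗ[ℂ] CBsp M₂ N₂}
    (hS : IsDetSupermap Sm) {E G : CBsp M₁ N₁}
    (hE : NormalCP M₁.toStarSubalgebra (E : M₁.toStarSubalgebra →ₗ[ℂ] (K₁ →L[ℂ] K₁)))
    (hG : NormalCP M₁.toStarSubalgebra (G : M₁.toStarSubalgebra →ₗ[ℂ] (K₁ →L[ℂ] K₁)))
    {c : ℝ} (hc : 0 < c)
    (h : (E : M₁.toStarSubalgebra →ₗ[ℂ] (K₁ →L[ℂ] K₁)) 1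
      + (G : M₁.toStarSubalgebra →ₗ[ℂ] (K₁ →L[ℂ] K₁)) 1 = (c : ℂ) • 1) :
    (Sm E : M₂.toStarSubalgebra →ₗ[ℂ] (K₂ →L[ℂ] K₂)) 1
      + (Sm G : M₂.toStarSubalgebra →ₗ[ℂ] (K₂ →L[ℂ] K₂)) 1 = (c : ℂ) • 1 := by
  have hc' : (c : ℂ) ≠ 0 := by exact_mod_cast hc.ne'
  set Φ : CBsp M₁ N₁ := (c : ℂ)⁻¹ • (E + G)
  have hΦ : IsChannel M₁.toStarSubalgebra N₁ (Φ : M₁.toStarSubalgebra →ₗ[ℂ] (K₁ →L[ℂ] K₁)) := by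
    refine ⟨(hE.add hG).smul (inv_nonneg.mpr (Complex.zero_le_real.mpr hc.le)),
      CBsp.apply_mem Φ.2, ?_⟩
    simp only [Φ, Submodule.coe_smul, Submodule.coe_add, LinearMap.smul_apply,
      LinearMap.add_apply, h, smul_smul, inv_mul_cancel₀ hc', one_smul]
  have hSΦ := (hS.2 Φ hΦ).2.2
  simp only [Φ, map_smul, map_add, Submodule.coe_smul, Submodule.coe_add, LinearMap.smul_apply,
      LinearMap.add_apply] at hSΦ
  rw [← hSΦ, smul_smul, mul_inv_cancel₀ hc', one_smul]

end Supermap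

theorem statement9_general {H K : Type*} [NormedAddCommGroup H] [InnerProductSpace ℂ H] [CompleteSpace H] [NormedAddCommGroup K] [InnerProductSpace ℂ K] [CompleteSpace K]
    (M : VonNeumannAlgebra H) (N : VonNeumannAlgebra K)
    (Sm : CBsp M (topVN H) →ₗ[ℂ] CBsp N (topVN K)) (hS : IsDetSupermap Sm)
    (E F : CBsp M (topVN H))
    (hE : NormalCP M.toStarSubalgebra (E : M.toStarSubalgebra →ₗ[ℂ] (H →L[ℂ] H)))
    (hF : NormalCP M.toStarSubalgebra (F : M.toStarSubalgebra →ₗ[ℂ] (H →L[ℂ] H)))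
    (h1 : (E : M.toStarSubalgebra →ₗ[ℂ] (H →L[ℂ] H)) 1
        = (F : M.toStarSubalgebra →ₗ[ℂ] (H →L[ℂ] H)) 1) :
    (Sm E : N.toStarSubalgebra →ₗ[ℂ] (K →L[ℂ] K)) 1
      = (Sm F : N.toStarSubalgebra →ₗ[ℂ] (K →L[ℂ] K)) 1 := by
  rcases subsingleton_or_nontrivial H with _ | _
  · rw [Subsingleton.elim E F]
  set D := (E : M.toStarSubalgebra →ₗ[ℂ] (H →L[ℂ] H)) 1
  have hc : (0 : ℝ) < ‖D‖ + 1 := by positivity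
  obtain ⟨Θ, hΘ, hΘ1⟩ := exists_normalCP_map_one_eq M.toStarSubalgebra
    (hE.1.isPositive_map_one.smul_one_sub (le_add_of_nonneg_right zero_le_one))
  set Θ' : CBsp M (topVN H) := ⟨Θ, hΘ.mem_CBsp_topVN⟩
  have hEΘ := hS.apply_one_add_apply_one_eq_smul_one hE (G := Θ') hΘ hc (by simp [Θ', hΘ1, D])
  have hFΘ := hS.apply_one_add_apply_one_eq_smul_one hF (G := Θ') hΘ hc (by simp [Θ', hΘ1, D, h1])
  exact add_right_cancel (hEΘ.trans hFΘ.symm)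

/-- If `S` is a deterministic quantum supermap from `CB(M,B(H))` to
`CB(N,B(K))` and `E, F` are normal CP maps from `M` to `B(H)` with `E(I_H) = F(I_H)`, then
`[S(E)](I_N) = [S(F)](I_N)`. -/
theorem statement9 {H K : Type*} [NormedAddCommGroup H] [InnerProductSpace ℂ H] [CompleteSpace H] [TopologicalSpace.SeparableSpace H] [NormedAddCommGroup K] [InnerProductSpace ℂ K] [CompleteSpace K] [TopologicalSpace.SeparableSpace K]
    (M : VonNeumannAlgebra H) (N : VonNeumannAlgebra K)
    (Sm : CBsp M (topVN H) →ₗ[ℂ] CBsp N (topVN K)) (hS : IsDetSupermap Sm)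
    (E F : CBsp M (topVN H))
    (hE : NormalCP M.toStarSubalgebra (E : M.toStarSubalgebra →ₗ[ℂ] (H →L[ℂ] H)))
    (hF : NormalCP M.toStarSubalgebra (F : M.toStarSubalgebra →ₗ[ℂ] (H →L[ℂ] H)))
    (h1 : (E : M.toStarSubalgebra →ₗ[ℂ] (H →L[ℂ] H)) 1
        = (F : M.toStarSubalgebra →ₗ[ℂ] (H →L[ℂ] H)) 1) :
    (Sm E : N.toStarSubalgebra →ₗ[ℂ] (K →L[ℂ] K)) 1
      = (Sm F : N.toStarSubalgebra →ₗ[ℂ] (K →L[ℂ] K)) 1 :=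
  statement9_general M N Sm hS E F hE hF h1

end QSM
end
end

section
/- Let H be a separable Hilbert space with Hilbert basis {e_i}_{i∈ℕ}, and let P_n be the orthogonal projection onto span{e_i : i ≤ n}. A unital *-homomorphism π : B(H) → B(Û) (with Û a not necessarily separable Hilbert space) is normal if and only if π(P_n) ↑ I_Û. -/
/-!
Let `T i ↑ T'` be an increasing net of positive operators and `C` an upper bound of the
`π (T i)`; compress by `Q n = π (P n)`. By Vigier's theorem `T i → T'`
strongly, so `T i * P n → T' * P n` in norm because `P n` has finite rank; as `π` is continuous,
`Q n * π (T i) * Q n → Q n * π T' * Q n` in norm, whence `Q n * π T' * Q n ≤ Q n * C * Q n`.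
Since `Q n ↑ 1`, Vigier's theorem again gives `Q n → 1` strongly, and letting `n → ∞` yields
`π T' ≤ C`. Conversely `P n ↑ 1`, so a normal `π` sends it to `π (P n) ↑ π 1 = 1`.
-/

open scoped ComplexOrder InnerProductSpace
open Filter Topology ContinuousLinearMap

set_option synthInstance.maxHeartbeats 1000000
set_option maxHeartbeats 1000000

noncomputable section

namespace QSM

variable {H K : Type*}
  [NormedAddCommGroup H] [InnerProductSpace ℂ H] [CompleteSpace H]
  [NormedAddCommGroup K] [InnerProductSpace ℂ K] [CompleteSpace K]

variable (S : StarSubalgebra ℂ (H →L[ℂ] H))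

/-- A unital *-homomorphism `π : B(H) → B(U)` is normal if it preserves least upper bounds of
bounded increasing nets of positive operators. -/
def NormalHom {H U : Type*} [NormedAddCommGroup H] [InnerProductSpace ℂ H] [CompleteSpace H]
    [NormedAddCommGroup U] [InnerProductSpace ℂ U] [CompleteSpace U]
    (π : (H →L[ℂ] H) →⋆ₐ[ℂ] (U →L[ℂ] U)) : Prop :=
  ∀ {ι : Type} [Preorder ι] [Nonempty ι] [IsDirected ι (· ≤ ·)],
  ∀ (T : ι → (H →L[ℂ] H)) (T' : H →L[ℂ] H),
    (∀ i, (T i).IsPositive) → (∀ i j, i ≤ j → opLE (T i) (T j)) →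
    (∃ Bd, ∀ i, opLE (T i) Bd) →
    opIsLUB (Set.range T) T' → opIsLUB (Set.range fun i => π (T i)) (π T')

theorem cauchySeq_of_dist_le_of_tendsto {α ι : Type*} [PseudoMetricSpace α] [Preorder ι]
    [Nonempty ι] [IsDirected ι (· ≤ ·)] {s : ι → α} (b : ι → ℝ)
    (h : ∀ i j, i ≤ j → dist (s i) (s j) ≤ b i) (hb : Tendsto b atTop (𝓝 0)) :
    CauchySeq s := by
  refine Metric.cauchy_iff.2 ⟨map_neBot, fun ε hε => ?_⟩
  obtain ⟨i, hi⟩ := (hb.eventually (gt_mem_nhds (half_pos hε))).exists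
  refine ⟨s '' Set.Ici i, image_mem_map (Ici_mem_atTop i), ?_⟩
  rintro - ⟨j, hj, rfl⟩ - ⟨k, hk, rfl⟩
  calc dist (s j) (s k) ≤ dist (s i) (s j) + dist (s i) (s k) := dist_triangle_left _ _ _
    _ ≤ b i + b i := add_le_add (h i j hj) (h i k hk)
    _ < ε := by linarith

section Vigier

variable {E : Type*} [NormedAddCommGroup E] [InnerProductSpace ℂ E]
variable {ι : Type*} [Preorder ι] [Nonempty ι] [IsDirected ι (· ≤ ·)] {T : ι → E →L[ℂ] E}

lemma isPositive_of_tendsto_inner {α : Type*} {l : Filter α} [l.NeBot] {A : α → E →L[ℂ] E}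
    {B : E →L[ℂ] E} (hA : ∀ᶠ a in l, (A a).IsPositive)
    (hB : ∀ x, Tendsto (fun a => ⟪A a x, x⟫_ℂ) l (𝓝 ⟪B x, x⟫_ℂ)) : B.IsPositive := by
  -- over `ℂ`, nonnegativity of the quadratic form already forces `B` to be symmetric
  refine (isPositive_iff_complex B).2 fun x => ?_
  have h0 : 0 ≤ ⟪B x, x⟫_ℂ := ge_of_tendsto (hB x) (hA.mono fun a ha => ha.inner_nonneg_left x)
  obtain ⟨r, hr, hrx⟩ := RCLike.nonneg_iff_exists_ofReal.1 h0
  rw [← hrx]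
  simpa using hr

lemma le_of_tendsto_inner {α : Type*} {l : Filter α} [l.NeBot] {A C : α → E →L[ℂ] E}
    {A' C' : E →L[ℂ] E} (h : ∀ᶠ a in l, A a ≤ C a)
    (hA : ∀ x, Tendsto (fun a => ⟪A a x, x⟫_ℂ) l (𝓝 ⟪A' x, x⟫_ℂ))
    (hC : ∀ x, Tendsto (fun a => ⟪C a x, x⟫_ℂ) l (𝓝 ⟪C' x, x⟫_ℂ)) : A' ≤ C' :=
  isPositive_of_tendsto_inner h fun x => by
    simpa only [sub_apply, inner_sub_left] using (hC x).sub (hA x)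

lemma re_inner_le_re_inner_of_le {a b : E →L[ℂ] E} (hab : a ≤ b) (x : E) :
    RCLike.re ⟪a x, x⟫_ℂ ≤ RCLike.re ⟪b x, x⟫_ℂ := by
  simpa only [sub_apply, inner_sub_left, map_sub, sub_nonneg] using hab.re_inner_nonneg_left x

lemma isLUB_of_tendsto_apply (hT : Monotone T) {L : E →L[ℂ] E}
    (hL : ∀ x, Tendsto (fun i => T i x) atTop (𝓝 (L x))) : IsLUB (Set.range T) L := by
  have hLi : ∀ x, Tendsto (fun i => ⟪T i x, x⟫_ℂ) atTop (𝓝 ⟪L x, x⟫_ℂ) :=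
    fun x => (hL x).inner tendsto_const_nhds
  refine ⟨?_, fun c hc => le_of_tendsto_inner (.of_forall fun i => hc ⟨i, rfl⟩) hLi
    fun _ => tendsto_const_nhds⟩
  rintro - ⟨i, rfl⟩
  exact le_of_tendsto_inner ((eventually_ge_atTop i).mono fun j hj => hT hj)
    (fun _ => tendsto_const_nhds) hLi

variable [CompleteSpace E]

lemma norm_apply_sq_le_of_nonneg {S : E →L[ℂ] E} (hS : 0 ≤ S) (x : E) :
    ‖S x‖ ^ 2 ≤ ‖S‖ * RCLike.re ⟪S x, x⟫_ℂ := by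
  set R := CFC.sqrt S
  have hRsa : IsSelfAdjoint R := .of_nonneg (CFC.sqrt_nonneg S)
  have hRR : R * R = S := CFC.sqrt_mul_sqrt_self S
  have hnorm : ‖R‖ * ‖R‖ = ‖S‖ := by
    rw [← hRR, ← CStarRing.norm_star_mul_self, hRsa.star_eq]
  have hform : ‖R x‖ ^ 2 = RCLike.re ⟪S x, x⟫_ℂ := by
    rw [← hRR, ← inner_self_eq_norm_sq (𝕜 := ℂ)]
    exact congrArg RCLike.re (isSelfAdjoint_iff_isSymmetric.1 hRsa (R x) x).symm
  calc ‖S x‖ ^ 2 = ‖R (R x)‖ ^ 2 := by rw [← hRR]; rfl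
    _ ≤ (‖R‖ * ‖R x‖) ^ 2 := by gcongr; exact R.le_opNorm _
    _ = ‖S‖ * RCLike.re ⟪S x, x⟫_ℂ := by rw [mul_pow, sq ‖R‖, hnorm, hform]

lemma cauchySeq_apply_of_monotone (hT : Monotone T) (hT0 : ∀ i, 0 ≤ T i) {B : E →L[ℂ] E}
    (hB : ∀ i, T i ≤ B) (x : E) : CauchySeq fun i => T i x := by
  set f : ι → ℝ := fun i => RCLike.re ⟪T i x, x⟫_ℂ
  have hf : Monotone f := fun i j hij => re_inner_le_re_inner_of_le (hT hij) x
  have hfB : BddAbove (Set.range f) :=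
    ⟨RCLike.re ⟪B x, x⟫_ℂ, by rintro - ⟨i, rfl⟩; exact re_inner_le_re_inner_of_le (hB i) x⟩
  set L := ⨆ j, f j
  refine cauchySeq_of_dist_le_of_tendsto (fun i => √(‖B‖ * (L - f i))) (fun i j hij => ?_) ?_
  · have hij' : 0 ≤ T j - T i := sub_nonneg.2 (hT hij)
    rw [Real.le_sqrt dist_nonneg (mul_nonneg (norm_nonneg _) (sub_nonneg.2 (le_ciSup hfB i)))]
    calc dist (T i x) (T j x) ^ 2 = ‖(T j - T i) x‖ ^ 2 := by
          rw [dist_comm, dist_eq_norm, sub_apply]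
      _ ≤ ‖T j - T i‖ * RCLike.re ⟪(T j - T i) x, x⟫_ℂ := norm_apply_sq_le_of_nonneg hij' x
      _ ≤ ‖B‖ * (L - f i) := by
        refine mul_le_mul ?_ ?_ (((nonneg_iff_isPositive _).1 hij').re_inner_nonneg_left x)
          (norm_nonneg _)
        · exact CStarAlgebra.norm_le_norm_of_nonneg_of_le hij'
            ((sub_le_self _ (hT0 i)).trans (hB j))
        · simpa only [sub_apply, inner_sub_left, map_sub] using
            sub_le_sub_right (le_ciSup hfB j) (f i)
  · have := (((tendsto_atTop_ciSup hf hfB).const_sub L).const_mul ‖B‖).sqrt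
    rwa [sub_self, mul_zero, Real.sqrt_zero] at this

lemma exists_tendsto_apply_of_monotone (hT : Monotone T) (hT0 : ∀ i, 0 ≤ T i) {B : E →L[ℂ] E}
    (hB : ∀ i, T i ≤ B) : ∃ L : E →L[ℂ] E, ∀ x, Tendsto (fun i => T i x) atTop (𝓝 (L x)) := by
  choose g hg using fun x => cauchySeq_tendsto_of_complete (cauchySeq_apply_of_monotone hT hT0 hB x)
  have hbdd : Bornology.IsBounded (Set.range T) := isBounded_iff_forall_norm_le.2
    ⟨‖B‖, by rintro - ⟨i, rfl⟩; exact CStarAlgebra.norm_le_norm_of_nonneg_of_le (hT0 i) (hB i)⟩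
  exact ⟨ofTendstoOfBoundedRange g T (tendsto_pi_nhds.2 hg) hbdd, hg⟩

/-- Vigier's theorem. -/
theorem tendsto_apply_of_isLUB (hT : Monotone T) (hT0 : ∀ i, 0 ≤ T i) {T' : E →L[ℂ] E}
    (hT' : IsLUB (Set.range T) T') (x : E) : Tendsto (fun i => T i x) atTop (𝓝 (T' x)) := by
  obtain ⟨L, hL⟩ := exists_tendsto_apply_of_monotone hT hT0 fun i => hT'.1 ⟨i, rfl⟩
  rw [hT'.unique (isLUB_of_tendsto_apply hT hL)]
  exact hL x

end Vigier

section PartialProj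

open InnerProductSpace

variable {H : Type*} [NormedAddCommGroup H] [InnerProductSpace ℂ H]

def partialProj (e : ℕ → H) (n : ℕ) : H →L[ℂ] H :=
  ∑ i ∈ Finset.range (n + 1), rankOne ℂ (e i) (e i)

lemma partialProj_nonneg (e : ℕ → H) (n : ℕ) : 0 ≤ partialProj e n :=
  (nonneg_iff_isPositive _).2 (isPositive_sum _ fun i _ => isPositive_rankOne_self (e i))

lemma tendsto_partialProj_apply (e : HilbertBasis ℕ ℂ H) (x : H) :
    Tendsto (fun n => partialProj e n x) atTop (𝓝 x) := by
  have h := (e.hasSum_repr x).tendsto_sum_nat.comp (tendsto_add_atTop_nat 1)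
  simpa [partialProj, e.repr_apply_apply, Function.comp_def] using h

lemma tendsto_mul_partialProj {α : Type*} {l : Filter α} (e : ℕ → H) (n : ℕ)
    {T : α → H →L[ℂ] H} {T' : H →L[ℂ] H} (hT : ∀ x, Tendsto (fun a => T a x) l (𝓝 (T' x))) :
    Tendsto (fun a => T a * partialProj e n) l (𝓝 (T' * partialProj e n)) := by
  simp only [partialProj, Finset.mul_sum, mul_def, comp_rankOne]
  have hcont : ∀ y : H, Continuous fun v : H => rankOne ℂ v y := fun y => by fun_prop
  exact tendsto_finsetSum _ fun i _ => (hcont (e i)).tendsto _ |>.comp (hT (e i))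

variable [CompleteSpace H]

lemma monotone_partialProj (e : ℕ → H) : Monotone (partialProj e) := fun _ _ h =>
  Finset.sum_le_sum_of_subset_of_nonneg (Finset.range_subset_range.2 (by omega)) fun i _ _ =>
    (nonneg_iff_isPositive _).2 (isPositive_rankOne_self (e i))

lemma isLUB_partialProj (e : HilbertBasis ℕ ℂ H) : IsLUB (Set.range (partialProj e)) 1 :=
  isLUB_of_tendsto_apply (monotone_partialProj e) (by simpa using tendsto_partialProj_apply e)

end PartialProj

section Normal

variable {E U : Type*} [NormedAddCommGroup E] [InnerProductSpace ℂ E]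
  [NormedAddCommGroup U] [InnerProductSpace ℂ U] [CompleteSpace E] [CompleteSpace U]

lemma tendsto_inner_conj_apply {α : Type*} {l : Filter α} {Q : α → E →L[ℂ] E}
    (hQ : ∀ a, IsSelfAdjoint (Q a)) (hQ1 : ∀ u, Tendsto (fun a => Q a u) l (𝓝 u))
    (X : E →L[ℂ] E) (u : E) :
    Tendsto (fun a => ⟪(Q a * X * Q a) u, u⟫_ℂ) l (𝓝 ⟪X u, u⟫_ℂ) := by
  have h : ∀ a, ⟪(Q a * X * Q a) u, u⟫_ℂ = ⟪X (Q a u), Q a u⟫_ℂ := fun a =>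
    (isSelfAdjoint_iff_isSymmetric.1 (hQ a)) (X (Q a u)) u
  simpa only [h, Function.comp_def] using ((X.continuous.tendsto u).comp (hQ1 u)).inner (hQ1 u)

theorem isLUB_range_map_of_isLUB (π : (E →L[ℂ] E) →⋆ₐ[ℂ] (U →L[ℂ] U)) (e : ℕ → E)
    (hπ : IsLUB (Set.range fun n => π (partialProj e n)) 1) {ι : Type*} [Preorder ι]
    [Nonempty ι] [IsDirected ι (· ≤ ·)] {T : ι → E →L[ℂ] E} (hT : Monotone T)
    (hT0 : ∀ i, 0 ≤ T i) {T' : E →L[ℂ] E} (hT' : IsLUB (Set.range T) T') :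
    IsLUB (Set.range fun i => π (T i)) (π T') := by
  set Q := fun n => π (partialProj e n)
  have hQ0 : ∀ n, 0 ≤ Q n := fun n => map_nonneg π (partialProj_nonneg e n)
  have hQ1 : ∀ u, Tendsto (fun n => Q n u) atTop (𝓝 u) := by
    simpa using tendsto_apply_of_isLUB ((OrderHomClass.mono π).comp (monotone_partialProj e)) hQ0 hπ
  refine ⟨?_, fun C hC => ?_⟩
  · rintro - ⟨i, rfl⟩
    exact OrderHomClass.mono π (hT'.1 ⟨i, rfl⟩)
  have hcomp : ∀ n, Q n * π T' * Q n ≤ Q n * C * Q n := fun n => by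
    have hlim : Tendsto (fun i => π (partialProj e n * (T i * partialProj e n))) atTop
        (𝓝 (π (partialProj e n * (T' * partialProj e n)))) :=
      ((map_continuous π).tendsto _).comp
        ((tendsto_mul_partialProj e n (tendsto_apply_of_isLUB hT hT0 hT')).const_mul _)
    simp only [← mul_assoc, map_mul] at hlim
    exact le_of_tendsto_inner
      (.of_forall fun i => conjugate_le_conjugate_of_nonneg (hC ⟨i, rfl⟩) (hQ0 n))
      (fun u => (((apply ℂ U u).continuous.tendsto _).comp hlim).inner tendsto_const_nhds)
      fun _ => tendsto_const_nhds
  exact le_of_tendsto_inner (.of_forall hcomp)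
    (tendsto_inner_conj_apply (fun n => .of_nonneg (hQ0 n)) hQ1 _)
    (tendsto_inner_conj_apply (fun n => .of_nonneg (hQ0 n)) hQ1 _)

end Normal

theorem statement11_general {H U : Type*} [NormedAddCommGroup H] [InnerProductSpace ℂ H] [CompleteSpace H]
    [NormedAddCommGroup U] [InnerProductSpace ℂ U] [CompleteSpace U]
    (e : HilbertBasis ℕ ℂ H) (π : (H →L[ℂ] H) →⋆ₐ[ℂ] (U →L[ℂ] U))
    (P : ℕ → (H →L[ℂ] H))
    (hP : ∀ n x, P n x = ∑ i ∈ Finset.range (n + 1), ⟪e i, x⟫_ℂ • e i) :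
    NormalHom π ↔ opIsLUB (Set.range fun n => π (P n)) 1 := by
  obtain rfl : P = partialProj e := funext fun n => ext fun x => by simp [hP, partialProj]
  have hP0 : ∀ n, (partialProj e n).IsPositive := fun n =>
    (nonneg_iff_isPositive _).1 (partialProj_nonneg e n)
  constructor
  · intro hπ
    simpa using hπ (partialProj e) 1 hP0 (fun _ _ h => monotone_partialProj e h)
      ⟨1, fun n => (isLUB_partialProj e).1 ⟨n, rfl⟩⟩ (isLUB_partialProj e)
  · intro hπ ι _ _ _ T T' hT0 hT _ hT'
    exact isLUB_range_map_of_isLUB π e hπ (fun i j h => hT i j h)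
      (fun i => (nonneg_iff_isPositive _).2 (hT0 i)) hT'

/-- Let `H` be a separable Hilbert space with Hilbert basis `(e_i)_(i ∈ ℕ)`
and let `P_n` be the orthogonal projection onto `span {e_i : i ≤ n}`. A unital
*-homomorphism `π : B(H) → B(Û)` (with `Û` not necessarily separable) is normal if and only
if `π(P_n) ↑ I`. -/
theorem statement11 {H U : Type*} [NormedAddCommGroup H] [InnerProductSpace ℂ H] [CompleteSpace H]
    [TopologicalSpace.SeparableSpace H] [NormedAddCommGroup U] [InnerProductSpace ℂ U] [CompleteSpace U]
    (e : HilbertBasis ℕ ℂ H) (π : (H →L[ℂ] H) →⋆ₐ[ℂ] (U →L[ℂ] U))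
    (P : ℕ → (H →L[ℂ] H))
    (hP : ∀ n x, P n x = ∑ i ∈ Finset.range (n + 1), ⟪e i, x⟫_ℂ • e i) :
    NormalHom π ↔ opIsLUB (Set.range fun n => π (P n)) 1 :=
  statement11_general e π P hP

end QSM
end
end
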